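/- arXiv:2308.00380 — 2 statements merged into one kernel-verified Lean document; each statement's English description precedes it below -/
import Mathlib

section
/- In the arrangement of three planes r_1^=, r_2^=, r_3^= in R^3 meeting in a single point r_*, suppose r_1, r_2, r_3 are convex polygons with r_i contained in r_i^= and at least two of the polygons do not contain r_*. Then at most 5 of the eight closed cells of the arrangement have nonempty intersection with all three polygons on their boundary. -/
open scoped RealInnerProductSpace

noncomputable section

variable (n : Fin 3 → EuclideanSpace ℝ (Fin 3)) (r : EuclideanSpace ℝ (Fin 3))

/-- The plane with normal `n i` through the point `r`. -/
def plane (i : Fin 3) : Set (EuclideanSpace ℝ (Fin 3)) := {y | ⟪n i, y - r⟫ = 0}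

/-- The closed cells of the arrangement of the three planes: closures of connected
components of the complement of the union of the planes. -/
def IsCell (C : Set (EuclideanSpace ℝ (Fin 3))) : Prop :=
  ∃ x ∈ (⋃ i, plane n r i)ᶜ,
    C = closure (connectedComponentIn ((⋃ i, plane n r i)ᶜ) x)

namespace Aux

def sgn (b : Bool) : ℝ := if b then 1 else -1

lemma sgn_mul_self (b : Bool) : sgn b * sgn b = 1 := by cases b <;> norm_num [sgn]

lemma sgn_false : sgn false = -1 := rfl
lemma sgn_true : sgn true = 1 := rfl

def cell (s : Fin 3 → Bool) : Set (EuclideanSpace ℝ (Fin 3)) :=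
  {y | ∀ i, 0 ≤ sgn (s i) * ⟪n i, y - r⟫}

def ucell (s : Fin 3 → Bool) : Set (EuclideanSpace ℝ (Fin 3)) :=
  {y | ∀ i, 0 < sgn (s i) * ⟪n i, y - r⟫}

lemma contf (i : Fin 3) : Continuous fun y : EuclideanSpace ℝ (Fin 3) => ⟪n i, y - r⟫ :=
  Continuous.inner continuous_const (continuous_id.sub continuous_const)

lemma isClosed_cell (s : Fin 3 → Bool) : IsClosed (cell n r s) := by
  have : cell n r s = ⋂ i, {y | 0 ≤ sgn (s i) * ⟪n i, y - r⟫} := by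
    ext y; simp [cell]
  rw [this]
  exact isClosed_iInter fun i => isClosed_le continuous_const (continuous_const.mul (contf n r i))

lemma isOpen_ucell (s : Fin 3 → Bool) : IsOpen (ucell n r s) := by
  have : ucell n r s = ⋂ i, {y | 0 < sgn (s i) * ⟪n i, y - r⟫} := by
    ext y; simp [ucell]
  rw [this]
  exact isOpen_iInter_of_finite fun i =>
    isOpen_lt continuous_const (continuous_const.mul (contf n r i))

lemma inner_affine (i : Fin 3) {a b : ℝ} (hab : a + b = 1) (y z : EuclideanSpace ℝ (Fin 3)) :
    ⟪n i, (a • y + b • z) - r⟫ = a * ⟪n i, y - r⟫ + b * ⟪n i, z - r⟫ := by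
  have hr : a • r + b • r = r := by rw [← add_smul, hab, one_smul]
  have h : (a • y + b • z) - r = a • (y - r) + b • (z - r) := by
    rw [smul_sub, smul_sub]
    rw [show a • y - a • r + (b • z - b • r) = a • y + b • z - (a • r + b • r) by abel, hr]
  rw [h, inner_add_right, real_inner_smul_right, real_inner_smul_right]

lemma convex_ucell (s : Fin 3 → Bool) : Convex ℝ (ucell n r s) := by
  intro y hy z hz a b ha hb hab
  intro i
  have h1 := hy i
  have h2 := hz i
  rw [inner_affine n r i hab, mul_add]
  rcases eq_or_lt_of_le ha with h | h
  · have hb1 : b = 1 := by linarith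
    rw [← h, hb1]; simpa using h2
  · nlinarith

lemma ucell_subset_cell (s : Fin 3 → Bool) : ucell n r s ⊆ cell n r s :=
  fun _ h i => (h i).le

lemma exists_dual (hn : LinearIndependent ℝ n) :
    ∃ m : Fin 3 → EuclideanSpace ℝ (Fin 3),
      (∀ i j, ⟪n i, m j⟫ = if i = j then 1 else 0) ∧
      ∀ y : EuclideanSpace ℝ (Fin 3), y = ∑ i, ⟪n i, y⟫ • m i := by
  classical
  set T : EuclideanSpace ℝ (Fin 3) →ₗ[ℝ] (Fin 3 → ℝ) :=
    LinearMap.pi (fun i => ((innerSL ℝ (n i)) : EuclideanSpace ℝ (Fin 3) →L[ℝ] ℝ).toLinearMap)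
    with hT
  have hTapp : ∀ y i, T y i = ⟪n i, y⟫ := by intro y i; simp [hT]
  have hspan : Submodule.span ℝ (Set.range n) = ⊤ := by
    apply LinearIndependent.span_eq_top_of_card_eq_finrank hn
    simp [finrank_euclideanSpace]
  have hinj : Function.Injective T := by
    rw [← LinearMap.ker_eq_bot]
    rw [Submodule.eq_bot_iff]
    intro y hy
    have h0 : ∀ i, ⟪n i, y⟫ = 0 := by
      intro i
      have := congrFun (LinearMap.mem_ker.mp hy) i
      rwa [hTapp] at this
    have hall : ∀ u ∈ Submodule.span ℝ (Set.range n), ⟪u, y⟫ = (0:ℝ) := by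
      intro u hu
      induction hu using Submodule.span_induction with
      | mem u hu => obtain ⟨i, rfl⟩ := hu; exact h0 i
      | zero => simp
      | add u v _ _ hu hv => rw [inner_add_left, hu, hv]; ring
      | smul c u _ hu => rw [real_inner_smul_left, hu]; ring
    have : ⟪y, y⟫ = (0:ℝ) := hall y (by rw [hspan]; trivial)
    exact inner_self_eq_zero.mp this
  have hrank : Module.finrank ℝ (EuclideanSpace ℝ (Fin 3)) = Module.finrank ℝ (Fin 3 → ℝ) := by
    simp [finrank_euclideanSpace]
  let Teq := LinearMap.linearEquivOfInjective T hinj hrank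
  have hTeq : ∀ y, Teq y = T y := fun y => rfl
  refine ⟨fun j => Teq.symm (Pi.single j 1), ?_, ?_⟩
  · intro i j
    have : T (Teq.symm (Pi.single j 1)) = Pi.single j 1 := by
      rw [← hTeq]; exact Teq.apply_symm_apply _
    have := congrFun this i
    rw [hTapp] at this
    rw [this]
    by_cases h : i = j
    · subst h; simp
    · simp [Pi.single_apply, h]
  · intro y
    apply hinj
    funext i
    rw [hTapp, map_sum]
    have : ∀ j, T (⟪n j, y⟫ • Teq.symm (Pi.single j 1)) i
        = ⟪n j, y⟫ * (Pi.single j 1 : Fin 3 → ℝ) i := by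
      intro j
      rw [map_smul]
      have : T (Teq.symm (Pi.single j 1)) = Pi.single j 1 := by
        rw [← hTeq]; exact Teq.apply_symm_apply _
      rw [this]; rfl
    simp only [Finset.sum_apply]
    rw [Finset.sum_congr rfl (fun j _ => this j)]
    simp [Pi.single_apply]


lemma ucell_subset_compl (s : Fin 3 → Bool) :
    ucell n r s ⊆ (⋃ i, plane n r i)ᶜ := by
  intro y hy
  simp only [Set.mem_compl_iff, Set.mem_iUnion, not_exists, plane, Set.mem_setOf_eq]
  intro i h0
  have := hy i
  rw [h0, mul_zero] at this
  exact lt_irrefl 0 this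

lemma component_eq_ucell (x : EuclideanSpace ℝ (Fin 3)) (hx : x ∈ (⋃ i, plane n r i)ᶜ) :
    connectedComponentIn ((⋃ i, plane n r i)ᶜ) x
      = ucell n r (fun i => decide (0 < ⟪n i, x - r⟫)) := by
  set s : Fin 3 → Bool := fun i => decide (0 < ⟪n i, x - r⟫) with hs
  have hx' : ∀ i, ⟪n i, x - r⟫ ≠ 0 := by
    intro i h0
    apply hx
    exact Set.mem_iUnion.2 ⟨i, h0⟩
  have hxu : x ∈ ucell n r s := by
    intro i
    rcases (hx' i).lt_or_gt with h | h
    · have hsi : s i = false := decide_eq_false h.not_gt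
      show 0 < sgn (s i) * ⟪n i, x - r⟫
      rw [hsi, sgn_false]; linarith
    · have hsi : s i = true := decide_eq_true h
      show 0 < sgn (s i) * ⟪n i, x - r⟫
      rw [hsi, sgn_true]; linarith
  apply Set.Subset.antisymm
  · intro y hy
    have hconn : IsPreconnected (connectedComponentIn ((⋃ i, plane n r i)ᶜ) x) :=
      (isPreconnected_connectedComponentIn)
    have hsub : connectedComponentIn ((⋃ i, plane n r i)ᶜ) x ⊆ (⋃ i, plane n r i)ᶜ :=
      connectedComponentIn_subset _ _
    intro i
    set g : EuclideanSpace ℝ (Fin 3) → ℝ := fun y => ⟪n i, y - r⟫ with hg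
    have hcover : connectedComponentIn ((⋃ i, plane n r i)ᶜ) x ⊆ g ⁻¹' (Set.Iio 0) ∪ g ⁻¹' (Set.Ioi 0) := by
      intro z hz
      have : ⟪n i, z - r⟫ ≠ 0 := by
        intro h0; exact hsub hz (Set.mem_iUnion.2 ⟨i, h0⟩)
      rcases this.lt_or_gt with h | h
      · exact Or.inl h
      · exact Or.inr h
    have hdisj : Disjoint (g ⁻¹' (Set.Iio 0)) (g ⁻¹' (Set.Ioi 0)) :=
      Disjoint.preimage g (Set.disjoint_left.mpr fun a h1 h2 =>
        absurd (Set.mem_Iio.mp h1) (not_lt.mpr (Set.mem_Ioi.mp h2).le))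
    have ho1 : IsOpen (g ⁻¹' (Set.Iio 0)) := (contf n r i).isOpen_preimage _ isOpen_Iio
    have ho2 : IsOpen (g ⁻¹' (Set.Ioi 0)) := (contf n r i).isOpen_preimage _ isOpen_Ioi
    have hxmem : x ∈ connectedComponentIn ((⋃ i, plane n r i)ᶜ) x :=
      mem_connectedComponentIn hx
    rcases (hx' i).lt_or_gt with h | h
    · have : connectedComponentIn ((⋃ i, plane n r i)ᶜ) x ⊆ g ⁻¹' (Set.Iio 0) :=
        IsPreconnected.subset_left_of_subset_union ho1 ho2 hdisj hcover ⟨x, hxmem, h⟩ hconn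
      have hy' : g y < 0 := this hy
      have hsF : s i = false := decide_eq_false h.not_gt
      show 0 < sgn (s i) * ⟪n i, y - r⟫
      rw [hsF, sgn_false]
      have : g y = ⟪n i, y - r⟫ := rfl
      linarith [this ▸ hy']
    · have : connectedComponentIn ((⋃ i, plane n r i)ᶜ) x ⊆ g ⁻¹' (Set.Ioi 0) :=
        IsPreconnected.subset_left_of_subset_union ho2 ho1 hdisj.symm
          (by intro z hz; exact (hcover hz).symm) ⟨x, hxmem, h⟩ hconn
      have hy' : 0 < g y := this hy
      have hsT : s i = true := decide_eq_true h
      show 0 < sgn (s i) * ⟪n i, y - r⟫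
      rw [hsT, sgn_true]
      have : g y = ⟪n i, y - r⟫ := rfl
      linarith [this ▸ hy']
  · exact IsPreconnected.subset_connectedComponentIn
      ((convex_ucell n r s).isPreconnected) hxu (ucell_subset_compl n r s)

lemma closure_ucell (hn : LinearIndependent ℝ n) (s : Fin 3 → Bool) :
    closure (ucell n r s) = cell n r s := by
  obtain ⟨m, hm, hdec⟩ := exists_dual n hn
  apply Set.Subset.antisymm
  · exact closure_minimal (ucell_subset_cell n r s) (isClosed_cell n r s)
  · intro y hy
    set z : EuclideanSpace ℝ (Fin 3) := r + ∑ i, sgn (s i) • m i with hz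
    have hzf : ∀ i, ⟪n i, z - r⟫ = sgn (s i) := by
      intro i
      rw [hz, add_sub_cancel_left, inner_sum]
      simp only [real_inner_smul_right, hm]
      rw [Finset.sum_eq_single i]
      · simp
      · intro b _ hb
        rw [if_neg (Ne.symm hb), mul_zero]
      · intro h; exact absurd (Finset.mem_univ i) h
    have hmem : ∀ c : ℝ, 0 < c → c ≤ 1 → y + c • (z - y) ∈ ucell n r s := by
      intro c hc hc1 i
      have hexp : (y + c • (z - y)) - r = (1 - c) • (y - r) + c • (z - r) := by
        rw [sub_smul, one_smul, smul_sub, smul_sub, smul_sub]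
        abel
      show 0 < sgn (s i) * ⟪n i, (y + c • (z - y)) - r⟫
      rw [hexp, inner_add_right, real_inner_smul_right, real_inner_smul_right, hzf]
      have h1 : 0 ≤ sgn (s i) * ⟪n i, y - r⟫ := hy i
      have h2 : sgn (s i) * sgn (s i) = 1 := by cases (s i) <;> norm_num [sgn]
      nlinarith
    have htend : Filter.Tendsto (fun k : ℕ => y + (1 / ((k:ℝ) + 1)) • (z - y))
        Filter.atTop (nhds y) := by
      have h0 : Filter.Tendsto (fun k : ℕ => (1 / ((k:ℝ) + 1)) • (z - y))
          Filter.atTop (nhds ((0:ℝ) • (z - y))) :=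
        tendsto_one_div_add_atTop_nhds_zero_nat.smul_const (z - y)
      rw [zero_smul] at h0
      simpa using (tendsto_const_nhds.add h0)
    refine mem_closure_of_tendsto htend (Filter.Eventually.of_forall fun k => ?_)
    apply hmem
    · positivity
    · rw [div_le_one (by positivity)]; linarith [Nat.cast_nonneg (α := ℝ) k]

lemma isCell_eq (hn : LinearIndependent ℝ n) {C : Set (EuclideanSpace ℝ (Fin 3))}
    (hC : IsCell n r C) : ∃ s : Fin 3 → Bool, C = cell n r s := by
  obtain ⟨x, hx, rfl⟩ := hC
  exact ⟨_, by rw [component_eq_ucell n r x hx, closure_ucell n r hn]⟩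


lemma polygon_misses (m : Fin 3 → EuclideanSpace ℝ (Fin 3))
    (hdec : ∀ y : EuclideanSpace ℝ (Fin 3), y = ∑ i, ⟪n i, y⟫ • m i)
    (i : Fin 3) (F : Finset (EuclideanSpace ℝ (Fin 3)))
    (K : Set (EuclideanSpace ℝ (Fin 3)))
    (hK : K = convexHull ℝ (F : Set (EuclideanSpace ℝ (Fin 3))))
    (hsub : K ⊆ plane n r i) (hr : r ∉ K) :
    ∃ σ : Fin 3 → Bool, ∀ s : Fin 3 → Bool, (∀ t, t ≠ i → s t = σ t) →
      ∀ y ∈ K, y ∉ cell n r s := by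
  have hconv : Convex ℝ K := hK ▸ convex_convexHull ℝ _
  have hcl : IsClosed K := hK ▸ (F.finite_toSet.isCompact_convexHull (𝕜 := ℝ)).isClosed
  obtain ⟨φ, u, hru, hKu⟩ := geometric_hahn_banach_point_closed hconv hcl hr
  refine ⟨fun t => decide (φ (m t) ≤ 0), fun s hs y hyK hyc => ?_⟩
  have hy0 : ⟪n i, y - r⟫ = 0 := hsub hyK
  have hpos : 0 < φ (y - r) := by
    have := hKu y hyK
    rw [map_sub]; linarith
  have hrep : y - r = ∑ t, ⟪n t, y - r⟫ • m t := hdec (y - r)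
  have hval : φ (y - r) = ∑ t, ⟪n t, y - r⟫ * φ (m t) := by
    conv_lhs => rw [hrep]
    rw [map_sum]
    exact Finset.sum_congr rfl fun t _ => by rw [map_smul]; rfl
  have hterm : ∀ t, ⟪n t, y - r⟫ * φ (m t) ≤ 0 := by
    intro t
    by_cases ht : t = i
    · subst ht; rw [hy0]; simp
    · have hst := hs t ht
      have hct := hyc t
      by_cases hφ : φ (m t) ≤ 0
      · have : s t = true := by rw [hst]; exact decide_eq_true hφ
        rw [this] at hct
        have h1 : (0:ℝ) ≤ ⟪n t, y - r⟫ := by simpa [sgn] using hct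
        exact mul_nonpos_of_nonneg_of_nonpos h1 hφ
      · push_neg at hφ
        have : s t = false := by rw [hst]; exact decide_eq_false (not_le.mpr hφ)
        rw [this] at hct
        have h1 : ⟪n t, y - r⟫ ≤ 0 := by
          have : (0:ℝ) ≤ -1 * ⟪n t, y - r⟫ := by simpa [sgn] using hct
          linarith
        exact mul_nonpos_of_nonpos_of_nonneg h1 hφ.le
  have : φ (y - r) ≤ 0 := by
    rw [hval]
    exact Finset.sum_nonpos fun t _ => hterm t
  linarith

lemma comb (i j : Fin 3) (hij : i ≠ j) (σ τ : Fin 3 → Bool) :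
    (Finset.univ.filter (fun s : Fin 3 → Bool =>
      ¬ (∀ t, t ≠ i → s t = σ t) ∧ ¬ (∀ t, t ≠ j → s t = τ t))).card ≤ 5 := by
  revert hij σ τ; revert i j; decide

end Aux

open Aux in
/-- If `r₁, r₂, r₃` are convex polygons with `rpoly i` contained in the `i`-th plane
of an arrangement of three planes meeting in the single point `r`, and at least two
of the polygons do not contain `r`, then at most `5` of the eight closed cells of
the arrangement have all three polygons on their boundary. -/
theorem at_most_five_cells (hn : LinearIndependent ℝ n)
    (F : Fin 3 → Finset (EuclideanSpace ℝ (Fin 3)))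
    (rpoly : Fin 3 → Set (EuclideanSpace ℝ (Fin 3)))
    (hpoly : ∀ i, rpoly i = convexHull ℝ (F i : Set (EuclideanSpace ℝ (Fin 3))))
    (hne : ∀ i, (F i).Nonempty)
    (hsub : ∀ i, rpoly i ⊆ plane n r i)
    (hmiss : ∃ i j : Fin 3, i ≠ j ∧ r ∉ rpoly i ∧ r ∉ rpoly j) :
    {C | IsCell n r C ∧ ∀ i, (rpoly i ∩ frontier C).Nonempty}.ncard ≤ 5 := by
  classical
  obtain ⟨i, j, hij, hri, hrj⟩ := hmiss
  obtain ⟨m, hm, hdec⟩ := exists_dual n hn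
  obtain ⟨σ, hσ⟩ := polygon_misses n r m hdec i (F i) (rpoly i) (hpoly i) (hsub i) hri
  obtain ⟨τ, hτ⟩ := polygon_misses n r m hdec j (F j) (rpoly j) (hpoly j) (hsub j) hrj
  set Fsc : Finset (Fin 3 → Bool) := Finset.univ.filter (fun s : Fin 3 → Bool =>
      ¬ (∀ t, t ≠ i → s t = σ t) ∧ ¬ (∀ t, t ≠ j → s t = τ t)) with hFsc
  set S : Set (Fin 3 → Bool) := {s | ∀ t, (rpoly t ∩ cell n r s).Nonempty} with hS
  have hSsub : S ⊆ (Fsc : Set (Fin 3 → Bool)) := by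
    intro s hsS
    simp only [hFsc, Finset.coe_filter, Set.mem_setOf_eq, Finset.mem_univ, true_and]
    constructor
    · intro hagree
      obtain ⟨y, hy1, hy2⟩ := hsS i
      exact hσ s hagree y hy1 hy2
    · intro hagree
      obtain ⟨y, hy1, hy2⟩ := hsS j
      exact hτ s hagree y hy1 hy2
  have hgood : {C | IsCell n r C ∧ ∀ i, (rpoly i ∩ frontier C).Nonempty} ⊆ cell n r '' S := by
    rintro C ⟨hC, hfr⟩
    obtain ⟨s, rfl⟩ := isCell_eq n r hn hC
    refine ⟨s, ?_, rfl⟩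
    intro t
    obtain ⟨y, hy1, hy2⟩ := hfr t
    exact ⟨y, hy1, (isClosed_cell n r s).frontier_subset hy2⟩
  calc {C | IsCell n r C ∧ ∀ i, (rpoly i ∩ frontier C).Nonempty}.ncard
      ≤ (cell n r '' S).ncard := Set.ncard_le_ncard hgood ((Set.toFinite S).image _)
    _ ≤ S.ncard := Set.ncard_image_le (Set.toFinite S)
    _ ≤ (Fsc : Set (Fin 3 → Bool)).ncard := Set.ncard_le_ncard hSsub (Fsc.finite_toSet)
    _ = Fsc.card := Set.ncard_coe_finset Fsc
    _ ≤ 5 := comb i j hij σ τ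
end
end

section
/- Let Δ be a triangle in the plane with vertices a, b, c. Suppose points x_1, x_2 lie on side ac with a, x_1, x_2, c in order, and points y_2, y_1 lie on side bc with b, y_2, y_1, c in order. Then the segments x_1 y_1 and x_2 y_2 intersect in a point inside the closed triangle Δ. -/
/-- Let `Δ` be the triangle with affinely independent vertices `a, b, c` in the
plane. If `x₁, x₂` lie on the side `[a, c]` with `a, x₁, x₂, c` in this order, and
`y₂, y₁` lie on the side `[b, c]` with `b, y₂, y₁, c` in this order, then the
segments `[x₁, y₁]` and `[x₂, y₂]` intersect in a point of the closed triangle. -/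
theorem segments_cross_in_triangle (a b c : ℝ × ℝ)
    (habc : AffineIndependent ℝ ![a, b, c])
    (x₁ x₂ y₁ y₂ : ℝ × ℝ)
    (hx₁ : x₁ ∈ segment ℝ a c) (hx₂ : x₂ ∈ segment ℝ a c)
    (hxo₁ : x₁ ∈ segment ℝ a x₂) (hxo₂ : x₂ ∈ segment ℝ x₁ c)
    (hy₁ : y₁ ∈ segment ℝ b c) (hy₂ : y₂ ∈ segment ℝ b c)
    (hyo₁ : y₂ ∈ segment ℝ b y₁) (hyo₂ : y₁ ∈ segment ℝ y₂ c) :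
    ∃ p, p ∈ segment ℝ x₁ y₁ ∧ p ∈ segment ℝ x₂ y₂ ∧
      p ∈ convexHull ℝ ({a, b, c} : Set (ℝ × ℝ)) := by
  obtain ⟨ρ, ρ', hρ, hρ', hρρ', hx2⟩ := hxo₂
  obtain ⟨κ, κ', hκ, hκ', hκκ', hy1⟩ := hyo₂
  have hρe : ρ = 1 - ρ' := by linarith
  have hκe : κ = 1 - κ' := by linarith
  subst hρe hκe
  have ha : a ∈ convexHull ℝ ({a, b, c} : Set (ℝ × ℝ)) := subset_convexHull _ _ (by simp)
  have hb : b ∈ convexHull ℝ ({a, b, c} : Set (ℝ × ℝ)) := subset_convexHull _ _ (by simp)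
  have hc : c ∈ convexHull ℝ ({a, b, c} : Set (ℝ × ℝ)) := subset_convexHull _ _ (by simp)
  have hconv : Convex ℝ (convexHull ℝ ({a, b, c} : Set (ℝ × ℝ))) := convex_convexHull _ _
  have hxin : x₁ ∈ convexHull ℝ ({a, b, c} : Set (ℝ × ℝ)) :=
    hconv.segment_subset ha hc hx₁
  have hyin : y₁ ∈ convexHull ℝ ({a, b, c} : Set (ℝ × ℝ)) :=
    hconv.segment_subset hb hc hy₁
  have hρ'1 : ρ' ≤ 1 := by linarith
  have hκ'1 : κ' ≤ 1 := by linarith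
  have hEnn : 0 ≤ ρ' + (1 - ρ') * κ' := by nlinarith
  rcases eq_or_lt_of_le hEnn with h0 | hpos
  · -- degenerate case: ρ' = 0 and κ' = 0, so x₂ = x₁ and y₁ = y₂
    have hρ'0 : ρ' = 0 := by nlinarith
    have hx : x₂ = x₁ := by rw [← hx2, hρ'0]; simp
    refine ⟨x₁, left_mem_segment _ _ _, ?_, hxin⟩
    rw [hx]
    exact left_mem_segment _ _ _
  · -- main case: intersection point with parameters u = ρ'/E, v = ρ'(1-κ')/E
    set E : ℝ := ρ' + (1 - ρ') * κ' with hEdef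
    have hE : E ≠ 0 := ne_of_gt hpos
    set u : ℝ := ρ' / E with hudef
    set v : ℝ := ρ' * (1 - κ') / E with hvdef
    have hu0 : 0 ≤ u := by positivity
    have hu1 : u ≤ 1 := by
      rw [hudef, div_le_one hpos]
      nlinarith
    have hv0 : 0 ≤ v := by
      rw [hvdef]
      positivity
    have hv1 : v ≤ 1 := by
      rw [hvdef, div_le_one hpos]
      nlinarith
    refine ⟨(1 - u) • x₁ + u • y₁, ⟨1 - u, u, by linarith, hu0, by ring, rfl⟩,
      ⟨1 - v, v, by linarith, hv0, by ring, ?_⟩, ?_⟩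
    · rw [← hx2, ← hy1, hudef, hvdef]
      match_scalars <;> field_simp <;> ring
    · exact hconv.segment_subset hxin hyin ⟨1 - u, u, by linarith, hu0, by ring, rfl⟩
end
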